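/- Let K be a compact metric space and f : K → K continuous. Suppose g^(k) = {g_m^(k) : m ∈ ℤ≥0} is a sequence of methods such that dist_{C⁰}(g_m^(k), f) → 0 as k → ∞ uniformly in m. If μ_k ∈ M(g^(k)) for each k and μ_k converges weakly-* to a measure μ*, then μ* is f-invariant. -/

import Mathlib

open MeasureTheory Filter Topology
open scoped NNReal ENNReal

/-- The trajectory of a method `g = {g_k}`: `methodOrbit g x k = g_0^k(x)` where
`g_0^k = g_{k-1} ∘ ⋯ ∘ g_0` and `g_0^0 = id`. -/
def methodOrbit {K : Type*} (g : ℕ → K → K) (x : K) : ℕ → K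
  | 0 => x
  | n + 1 => g n (methodOrbit g x n)

/-- The empirical measure `μ_N = (1/N) ∑_{k<N} δ(g_0^k(x))` for `N = n+1`, as a finite
Borel measure (it is in fact a probability measure). -/
noncomputable def empiricalFM {K : Type*} [MetricSpace K] [MeasurableSpace K]
    (g : ℕ → K → K) (x : K) (n : ℕ) : MeasureTheory.FiniteMeasure K :=
  ⟨((n + 1 : ℝ≥0))⁻¹ • ∑ k ∈ Finset.range (n + 1),
      MeasureTheory.Measure.dirac (methodOrbit g x k), by infer_instance⟩

/-- `M₀(g,x)`: the set of weak-* limit points of the empirical measures along the trajectory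
of the method `g` starting at `x`; it equals `⋂_{n≥1} closure {μ_N : N ≥ n}`. -/
noncomputable def M0 {K : Type*} [MetricSpace K] [MeasurableSpace K] [OpensMeasurableSpace K]
    (g : ℕ → K → K) (x : K) : Set (MeasureTheory.FiniteMeasure K) :=
  ⋂ n : ℕ, closure (empiricalFM g x '' Set.Ici n)

/-- `M(g)`: the set of invariant measures of the method `g`, i.e. the closed convex hull
(in the weak-* topology) of `⋃_{x ∈ K} M₀(g,x)`. -/
noncomputable def Mset {K : Type*} [MetricSpace K] [MeasurableSpace K] [OpensMeasurableSpace K]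
    (g : ℕ → K → K) : Set (MeasureTheory.FiniteMeasure K) :=
  closure (convexHull ℝ≥0 (⋃ x : K, M0 g x))

open scoped BoundedContinuousFunction

/-! For bounded continuous `φ`, the defect `ν ↦ ∫ (φ ∘ f - φ) dν` is continuous and `ℝ≥0`-linear.
On the `N`-th empirical measure of a method `g` it telescopes, up to an error `2‖φ‖ / N`, into an
average of `φ (f xₖ) - φ (gₖ xₖ)`, so it is bounded by `sup |φ ∘ f - φ ∘ gₘ|`; this bound passes to
limit points, convex combinations and closures, i.e. to all of `M(g)`. Uniform continuity of `φ`
on the compact `K` makes this bound tend to `0` along `g⁽ᵏ⁾`, so the defect of `μ*` vanishes for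
every `φ`, and bounded continuous functions determine a finite Borel measure. -/

namespace MeasureTheory.FiniteMeasure

variable {Ω : Type*} [MeasurableSpace Ω] [TopologicalSpace Ω] [OpensMeasurableSpace Ω]

noncomputable def integralAgainst (h : Ω →ᵇ ℝ) : FiniteMeasure Ω →ₗ[ℝ≥0] ℝ where
  toFun ν := ∫ x, h x ∂(ν : Measure Ω)
  map_add' _ _ := integral_add_measure (h.integrable _) (h.integrable _)
  map_smul' _ _ := integral_smul_nnreal_measure _ _

theorem integralAgainst_apply (h : Ω →ᵇ ℝ) (ν : FiniteMeasure Ω) :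
    integralAgainst h ν = ∫ x, h x ∂(ν : Measure Ω) := rfl

theorem continuous_integralAgainst (h : Ω →ᵇ ℝ) : Continuous (integralAgainst h) :=
  continuous_integral_boundedContinuousFunction h

end MeasureTheory.FiniteMeasure

open MeasureTheory.FiniteMeasure

theorem abs_sum_sub_le_of_abs_sub_succ_le {u v : ℕ → ℝ} {ε C : ℝ}
    (hstep : ∀ k, |v k - u (k + 1)| ≤ ε) (hu : ∀ k, |u k| ≤ C) (N : ℕ) :
    |∑ k ∈ Finset.range N, (v k - u k)| ≤ N * ε + 2 * C := by
  have hsplit : ∑ k ∈ Finset.range N, (v k - u k)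
      = ∑ k ∈ Finset.range N, (v k - u (k + 1)) + (u N - u 0) := by
    rw [← Finset.sum_range_sub u, ← Finset.sum_add_distrib]
    exact Finset.sum_congr rfl fun k _ => by ring
  calc |∑ k ∈ Finset.range N, (v k - u k)|
      ≤ ∑ k ∈ Finset.range N, |v k - u (k + 1)| + (|u N| + |u 0|) := by
        rw [hsplit]
        exact (abs_add_le _ _).trans
          (add_le_add (Finset.abs_sum_le_sum_abs _ _) (abs_sub _ _))
    _ ≤ ∑ _k ∈ Finset.range N, ε + (C + C) :=
        add_le_add (Finset.sum_le_sum fun k _ => hstep k) (add_le_add (hu N) (hu 0))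
    _ = N * ε + 2 * C := by
        simp only [Finset.sum_const, Finset.card_range, nsmul_eq_mul]
        ring

section Method

variable {K : Type*} [MetricSpace K] [MeasurableSpace K]

theorem integral_empiricalFM [OpensMeasurableSpace K] (g : ℕ → K → K) (x : K) (n : ℕ)
    (h : K →ᵇ ℝ) :
    ∫ y, h y ∂(empiricalFM g x n : Measure K)
      = (∑ k ∈ Finset.range (n + 1), h (methodOrbit g x k)) / (n + 1) := by
  change ∫ y, h y ∂(((n + 1 : ℝ≥0))⁻¹ • ∑ k ∈ Finset.range (n + 1),
    Measure.dirac (methodOrbit g x k)) = _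
  rw [integral_smul_nnreal_measure, integral_finsetSum_measure fun k _ => h.integrable _]
  simp only [integral_dirac, NNReal.smul_def, smul_eq_mul]
  push_cast
  ring

theorem M0_subset_of_eventually_mem [OpensMeasurableSpace K] {g : ℕ → K → K} {x : K}
    {S : Set (FiniteMeasure K)} (hS : IsClosed S) (h : ∀ᶠ n in atTop, empiricalFM g x n ∈ S) :
    M0 g x ⊆ S := by
  obtain ⟨N, hN⟩ := eventually_atTop.1 h
  exact (Set.iInter_subset _ N).trans
    (closure_minimal (Set.image_subset_iff.2 hN) hS)

theorem Mset_subset_of_isClosed_of_convex [OpensMeasurableSpace K] {g : ℕ → K → K}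
    {S : Set (FiniteMeasure K)} (hS : IsClosed S) (hSc : Convex ℝ≥0 S) (h : ∀ x, M0 g x ⊆ S) :
    Mset g ⊆ S :=
  closure_minimal (convexHull_min (Set.iUnion_subset h) hSc) hS

variable [BorelSpace K]

theorem abs_integralAgainst_comp_sub_empiricalFM_le {f : C(K, K)} {φ : K →ᵇ ℝ}
    {g : ℕ → K → K} {ε : ℝ} (hε : ∀ m y, |φ (f y) - φ (g m y)| ≤ ε) (x : K) (n : ℕ) :
    |integralAgainst (φ.compContinuous f - φ) (empiricalFM g x n)|
      ≤ ε + 2 * ‖φ‖ / (n + 1) := by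
  have hsum := abs_sum_sub_le_of_abs_sub_succ_le (u := fun k => φ (methodOrbit g x k))
    (v := fun k => φ (f (methodOrbit g x k))) (fun k => hε k _)
    (fun k => φ.norm_coe_le_norm _) (n + 1)
  rw [integralAgainst_apply, integral_empiricalFM, abs_div,
    abs_of_pos (by positivity : (0 : ℝ) < n + 1), div_le_iff₀ (by positivity)]
  calc |∑ k ∈ Finset.range (n + 1), (φ.compContinuous f - φ) (methodOrbit g x k)|
      ≤ (n + 1) * ε + 2 * ‖φ‖ := by simpa using hsum
    _ = (ε + 2 * ‖φ‖ / (n + 1)) * (n + 1) := by field_simp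

theorem abs_integralAgainst_comp_sub_le_of_mem_Mset {f : C(K, K)} {φ : K →ᵇ ℝ}
    {g : ℕ → K → K} {ε : ℝ} (hε : ∀ m y, |φ (f y) - φ (g m y)| ≤ ε) {ν : FiniteMeasure K}
    (hν : ν ∈ Mset g) :
    |integralAgainst (φ.compContinuous f - φ) ν| ≤ ε := by
  set Λ := integralAgainst (φ.compContinuous f - φ)
  have hΛ := continuous_integralAgainst (φ.compContinuous f - φ)
  suffices Mset g ⊆ Λ ⁻¹' Set.Icc (-ε) ε from abs_le.2 (this hν)
  refine Mset_subset_of_isClosed_of_convex (isClosed_Icc.preimage hΛ)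
    ((convex_Icc _ _).linear_preimage Λ) fun x ρ hρ => abs_le.1 ?_
  refine le_of_forall_pos_le_add fun δ hδ => ?_
  have hsmall : ∀ᶠ n : ℕ in atTop, 2 * ‖φ‖ / (n + 1) ≤ δ := by
    have := (tendsto_one_div_add_atTop_nhds_zero_nat (𝕜 := ℝ)).const_mul (2 * ‖φ‖)
    rw [mul_zero] at this
    filter_upwards [this.eventually_le_const hδ] with n hn
    simpa [div_eq_mul_inv] using hn
  refine M0_subset_of_eventually_mem (S := {ρ | |Λ ρ| ≤ ε + δ})
    (isClosed_le hΛ.abs continuous_const) ?_ hρ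
  filter_upwards [hsmall] with n hn
  exact (abs_integralAgainst_comp_sub_empiricalFM_le hε x n).trans (by linarith)

theorem tendsto_integralAgainst_comp_sub_zero [CompactSpace K] {ι : Type*} {l : Filter ι}
    {f : C(K, K)} (φ : K →ᵇ ℝ) {g : ι → ℕ → K → K}
    (hg : TendstoUniformly (fun k (p : ℕ × K) => g k p.1 p.2) (fun p => f p.2) l)
    {μ : ι → FiniteMeasure K} (hμ : ∀ k, μ k ∈ Mset (g k)) :
    Tendsto (fun k => integralAgainst (φ.compContinuous f - φ) (μ k)) l (𝓝 0) := by
  have hφg :=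
    (CompactSpace.uniformContinuous_of_continuous φ.continuous).comp_tendstoUniformly hg
  refine Metric.tendsto_nhds.2 fun ε hε => ?_
  filter_upwards [Metric.tendstoUniformly_iff.1 hφg (ε / 2) (half_pos hε)] with k hk
  have hclose : ∀ m y, |φ (f y) - φ (g k m y)| ≤ ε / 2 := fun m y => by
    simpa only [Real.dist_eq, Function.comp_apply] using (hk (m, y)).le
  rw [Real.dist_0_eq_abs]
  exact (abs_integralAgainst_comp_sub_le_of_mem_Mset hclose (hμ k)).trans_lt (half_lt_self hε)

end Method

theorem stmt7_general {K : Type*} [MetricSpace K] [CompactSpace K] [MeasurableSpace K] [BorelSpace K]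
    (f : K → K) (hf : Continuous f)
    (g : ℕ → ℕ → K → K)
    (hconv : ∀ ε > (0 : ℝ), ∃ N : ℕ, ∀ k ≥ N, ∀ m : ℕ, ∀ y : K, dist (g k m y) (f y) ≤ ε)
    (μ : ℕ → FiniteMeasure K) (hμ : ∀ k, μ k ∈ Mset (g k))
    (μstar : FiniteMeasure K) (hlim : Tendsto μ atTop (𝓝 μstar)) :
    (μstar : Measure K).map f = (μstar : Measure K) := by
  set F : C(K, K) := ⟨f, hf⟩
  have hunif : TendstoUniformly (fun k (p : ℕ × K) => g k p.1 p.2) (fun p => F p.2) atTop := by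
    refine Metric.tendstoUniformly_iff.2 fun ε hε => ?_
    obtain ⟨N, hN⟩ := hconv (ε / 2) (half_pos hε)
    filter_upwards [eventually_ge_atTop N] with k hk p
    rw [dist_comm]
    exact (hN k hk p.1 p.2).trans_lt (half_lt_self hε)
  have hdefect (φ : K →ᵇ ℝ) : integralAgainst (φ.compContinuous F - φ) μstar = 0 :=
    tendsto_nhds_unique (((continuous_integralAgainst _).tendsto μstar).comp hlim)
      (tendsto_integralAgainst_comp_sub_zero φ hunif hμ)
  refine ext_of_forall_integral_eq_of_IsFiniteMeasure fun φ => ?_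
  rw [integral_map hf.aemeasurable φ.continuous.aestronglyMeasurable, ← sub_eq_zero]
  have h := hdefect φ
  rwa [integralAgainst_apply, BoundedContinuousFunction.coe_sub,
    integral_sub' ((φ.compContinuous F).integrable _) (φ.integrable _)] at h

/-- Let `g⁽ᵏ⁾` be a sequence of methods on a compact metric space `K`
converging to a continuous map `f` uniformly in the index `m` of the method. If `μ_k` is an
invariant measure of the method `g⁽ᵏ⁾` for each `k` and `μ_k → μ*` weakly-*, then `μ*` is
`f`-invariant. -/
theorem stmt7 {K : Type*} [MetricSpace K] [CompactSpace K] [MeasurableSpace K] [BorelSpace K]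
    (f : K → K) (hf : Continuous f)
    (g : ℕ → ℕ → K → K) (hgc : ∀ k m, Continuous (g k m))
    (hconv : ∀ ε > (0 : ℝ), ∃ N : ℕ, ∀ k ≥ N, ∀ m : ℕ, ∀ y : K, dist (g k m y) (f y) ≤ ε)
    (μ : ℕ → FiniteMeasure K) (hμ : ∀ k, μ k ∈ Mset (g k))
    (μstar : FiniteMeasure K) (hlim : Tendsto μ atTop (𝓝 μstar)) :
    (μstar : Measure K).map f = (μstar : Measure K) :=
  stmt7_general f hf g hconv μ hμ μstar hlim
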